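/- arXiv:1003.4072 — 3 statements merged into one kernel-verified Lean document; each statement's English description precedes it below -/
import Mathlib

section
/- For any positive integers w1, w2, w3, any complex numbers y1, y2, y3, and any nonnegative integer n, the quantity Σ_{k+l+m=n} (n choose k,l,m) E_{k,χ}(w_{σ(1)} y1) E_{l,χ}(w_{σ(2)} y2) E_{m,χ}(w_{σ(3)} y3) w_{σ(1)}^{l+m} w_{σ(2)}^{k+m} w_{σ(3)}^{k+l} is the same for all six permutations σ of {1,2,3}; in particular Σ_{k+l+m=n} (n choose k,l,m) E_{k,χ}(w1 y1) E_{l,χ}(w2 y2) E_{m,χ}(w3 y3) w1^{l+m} w2^{k+m} w3^{k+l} is invariant under all permutations of (w1, w2, w3). -/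
/-!
The generating function of `E_{·,χ}(x)` is `e^{xt} G(t)` with `G` independent of `x`, because
`e^{dt} + 1` is not a zero divisor. Hence the product of the generating functions at `w₁y₁, w₂y₂,
w₃y₃`, rescaled by `t ↦ w₂w₃t, w₁w₃t, w₁w₂t`, equals
`e^{w₁w₂w₃(y₁+y₂+y₃)t} G(w₂w₃t) G(w₁w₃t) G(w₁w₂t)`, which is symmetric in `w`; the triple sum is
`n!` times its `n`-th coefficient.
-/

open Finset

/-- The formal exponential power series `e^{ct} = Σ cⁿ tⁿ/n!` in `ℂ[[t]]`. -/
noncomputable def expPS (c : ℂ) : PowerSeries ℂ :=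
  PowerSeries.mk fun n => c ^ n / n.factorial

/-- `Σ_{a=0}^{d-1} (-1)^a χ(a) e^{at}` as a formal power series. -/
noncomputable def altSum (χ : ℤ → ℂ) (d : ℕ) : PowerSeries ℂ :=
  ∑ a ∈ Finset.range d, ((-1 : ℂ) ^ a * χ (a : ℤ)) • expPS (a : ℂ)

/-- `E` is the family of generalized Euler polynomials attached to `χ` mod `d`:
`(Σ_{n≥0} E_{n,χ}(x) tⁿ/n!) · (e^{dt}+1) = 2 e^{xt} · Σ_{a=0}^{d-1} (-1)^a χ(a) e^{at}`. -/
def IsGenEuler (d : ℕ) (χ : ℤ → ℂ) (E : ℕ → ℂ → ℂ) : Prop :=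
  ∀ x : ℂ, (PowerSeries.mk fun n => E n x / n.factorial) * (expPS (d : ℂ) + 1)
    = (2 : PowerSeries ℂ) * expPS x * altSum χ d

/-- The alternating generalized power sum `T_k(n,χ) = Σ_{a=0}^{n} (-1)^a χ(a) a^k`
(with the convention `0^0 = 1`). -/
noncomputable def altPowSum (χ : ℤ → ℂ) (k n : ℕ) : ℂ :=
  ∑ a ∈ Finset.range (n + 1), (-1 : ℂ) ^ a * χ (a : ℤ) * (a : ℂ) ^ k

/-- The multinomial coefficient `(k+l+m)! / (k! l! m!)`. -/
def multinom (k l m : ℕ) : ℕ :=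
  (k + l + m).factorial / (k.factorial * l.factorial * m.factorial)

open PowerSeries

lemma expPS_eq_rescale_exp (a : ℂ) : expPS a = rescale a (exp ℂ) := by
  ext n
  simp [expPS, coeff_rescale, coeff_exp, div_eq_mul_inv]

lemma rescale_expPS (c a : ℂ) : rescale c (expPS a) = expPS (a * c) := by
  simp only [expPS, rescale_mk, mul_pow]
  ext n
  simp only [coeff_mk]
  ring

@[simp]
lemma constantCoeff_expPS (a : ℂ) : constantCoeff (expPS a) = 1 := by
  simp [expPS, ← coeff_zero_eq_constantCoeff_apply]

lemma expPS_zero : expPS 0 = 1 := by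
  simp [expPS_eq_rescale_exp]

noncomputable def eulerGF (E : ℕ → ℂ → ℂ) (x : ℂ) : PowerSeries ℂ :=
  mk fun n => E n x / n.factorial

lemma IsGenEuler.eulerGF_eq {d : ℕ} {χ : ℤ → ℂ} {E : ℕ → ℂ → ℂ} (hE : IsGenEuler d χ E)
    (x : ℂ) : eulerGF E x = expPS x * eulerGF E 0 := by
  have hden : expPS (d : ℂ) + 1 ≠ 0 := fun h => by
    simpa using congrArg constantCoeff h
  apply mul_right_cancel₀ hden
  rw [mul_assoc, eulerGF, eulerGF, hE, hE, expPS_zero]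
  ring

noncomputable def scaledEulerProd {ι : Type*} [Fintype ι] [DecidableEq ι] (E : ℕ → ℂ → ℂ)
    (y c : ι → ℂ) : PowerSeries ℂ :=
  ∏ i, rescale (∏ j ∈ univ.erase i, c j) (eulerGF E (c i * y i))

section Symmetry

variable {ι : Type*} [Fintype ι] [DecidableEq ι] {E : ℕ → ℂ → ℂ} {G : PowerSeries ℂ}

lemma scaledEulerProd_eq (hE : ∀ x, eulerGF E x = expPS x * G) (y c : ι → ℂ) :
    scaledEulerProd E y c = (∏ i, expPS ((∏ j, c j) * y i)) *
      ∏ i, rescale (∏ j ∈ univ.erase i, c j) G := by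
  simp only [scaledEulerProd, hE, map_mul, rescale_expPS, prod_mul_distrib]
  congr 1
  refine prod_congr rfl fun i _ => ?_
  rw [← mul_prod_erase univ c (mem_univ i), mul_right_comm]

lemma scaledEulerProd_comp_perm (hE : ∀ x, eulerGF E x = expPS x * G)
    (y c : ι → ℂ) (σ : Equiv.Perm ι) :
    scaledEulerProd E y (c ∘ σ) = scaledEulerProd E y c := by
  have herase : ∀ i, ∏ j ∈ univ.erase i, c (σ j) = ∏ j ∈ univ.erase (σ i), c j := fun i =>
    prod_equiv σ (by simp) (by simp)
  simp only [scaledEulerProd_eq hE, Function.comp_apply, herase]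
  rw [Equiv.prod_comp σ c,
    Equiv.prod_comp σ fun i => rescale (∏ j ∈ univ.erase i, c j) G]

end Symmetry

lemma coeff_mk_mul_mk_mul_mk {R : Type*} [CommSemiring R] (f g h : ℕ → R) (n : ℕ) :
    coeff n (mk f * mk g * mk h) =
      ∑ k ∈ range (n + 1), ∑ l ∈ range (n + 1 - k), f k * g l * h (n - k - l) := by
  rw [mul_assoc, coeff_mul, Nat.sum_antidiagonal_eq_sum_range_succ_mk]
  refine sum_congr rfl fun k hk => ?_
  rw [coeff_mul, Nat.sum_antidiagonal_eq_sum_range_succ_mk, mul_sum,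
    show n + 1 - k = n - k + 1 by simp at hk; omega]
  simp [mul_assoc, Nat.sub_sub]

lemma multinom_eq_div (k l m : ℕ) :
    (multinom k l m : ℂ) = (k + l + m).factorial / (k.factorial * l.factorial * m.factorial) := by
  have hdvd : k.factorial * l.factorial * m.factorial ∣ (k + l + m).factorial :=
    (mul_dvd_mul_right (Nat.factorial_mul_factorial_dvd_factorial_add k l) _).trans
      (Nat.factorial_mul_factorial_dvd_factorial_add (k + l) m)
  rw [multinom, Nat.cast_div hdvd (by simp [Nat.factorial_ne_zero]), Nat.cast_mul, Nat.cast_mul]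

lemma scaledEulerProd_fin_three (E : ℕ → ℂ → ℂ) (y c : Fin 3 → ℂ) :
    scaledEulerProd E y c =
      rescale (c 1 * c 2) (eulerGF E (c 0 * y 0)) * rescale (c 0 * c 2) (eulerGF E (c 1 * y 1)) *
        rescale (c 0 * c 1) (eulerGF E (c 2 * y 2)) := by
  have h0 : univ.erase (0 : Fin 3) = {1, 2} := by decide
  have h1 : univ.erase (1 : Fin 3) = {0, 2} := by decide
  have h2 : univ.erase (2 : Fin 3) = {0, 1} := by decide
  simp [scaledEulerProd, Fin.prod_univ_three, h0, h1, h2]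

lemma sum_multinom_eq_factorial_mul_coeff (E : ℕ → ℂ → ℂ) (y1 y2 y3 : ℂ) (c : Fin 3 → ℂ)
    (n : ℕ) :
    (∑ k ∈ range (n + 1), ∑ l ∈ range (n + 1 - k),
      (multinom k l (n - k - l) : ℂ) * E k (c 0 * y1) * E l (c 1 * y2) *
        E (n - k - l) (c 2 * y3) *
        c 0 ^ (l + (n - k - l)) * c 1 ^ (k + (n - k - l)) * c 2 ^ (k + l))
    = n.factorial * coeff n (scaledEulerProd E ![y1, y2, y3] c) := by
  simp only [scaledEulerProd_fin_three, eulerGF, rescale_mk, coeff_mk_mul_mk_mul_mk, mul_sum,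
    Matrix.cons_val_zero, Matrix.cons_val_one, Matrix.cons_val_two, Matrix.tail_cons,
    Matrix.head_cons]
  refine sum_congr rfl fun k hk => sum_congr rfl fun l hl => ?_
  obtain ⟨m, rfl⟩ : ∃ m, n = k + l + m := ⟨n - k - l, by simp at hk hl; omega⟩
  rw [show k + l + m - k - l = m by omega, multinom_eq_div]
  field_simp
  ring

theorem stmt_0_general (d : ℕ) (χ : ℤ → ℂ)
    (E : ℕ → ℂ → ℂ) (hE : IsGenEuler d χ E)
    (w : Fin 3 → ℕ) (y1 y2 y3 : ℂ) (n : ℕ)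
    (σ : Equiv.Perm (Fin 3)) :
    (∑ k ∈ range (n + 1), ∑ l ∈ range (n + 1 - k),
      (multinom k l (n - k - l) : ℂ) * E k ((w (σ 0) : ℂ) * y1) *
        E l ((w (σ 1) : ℂ) * y2) * E (n - k - l) ((w (σ 2) : ℂ) * y3) *
        (w (σ 0) : ℂ) ^ (l + (n - k - l)) * (w (σ 1) : ℂ) ^ (k + (n - k - l)) *
        (w (σ 2) : ℂ) ^ (k + l))
    = ∑ k ∈ range (n + 1), ∑ l ∈ range (n + 1 - k),
      (multinom k l (n - k - l) : ℂ) * E k ((w 0 : ℂ) * y1) *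
        E l ((w 1 : ℂ) * y2) * E (n - k - l) ((w 2 : ℂ) * y3) *
        (w 0 : ℂ) ^ (l + (n - k - l)) * (w 1 : ℂ) ^ (k + (n - k - l)) *
        (w 2 : ℂ) ^ (k + l) := by
  let c : Fin 3 → ℂ := fun i => w i
  calc _ = n.factorial * coeff n (scaledEulerProd E ![y1, y2, y3] (c ∘ σ)) :=
        sum_multinom_eq_factorial_mul_coeff E y1 y2 y3 (c ∘ σ) n
    _ = n.factorial * coeff n (scaledEulerProd E ![y1, y2, y3] c) := by
        rw [scaledEulerProd_comp_perm hE.eulerGF_eq]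
    _ = _ := (sum_multinom_eq_factorial_mul_coeff E y1 y2 y3 c n).symm

/-- Theorem 1: the triple sum with three generalized Euler polynomial factors is
invariant under all six permutations of `(w₁, w₂, w₃)`. -/
theorem stmt_0 (d : ℕ) (hd : Odd d) (hd0 : 0 < d) (χ : ℤ → ℂ)
    (hper : ∀ a : ℤ, χ (a + d) = χ a)
    (hmul : ∀ a b : ℤ, χ (a * b) = χ a * χ b) (hone : χ 1 = 1)
    (hvan : ∀ a : ℤ, 1 < Int.gcd a d → χ a = 0)
    (E : ℕ → ℂ → ℂ) (hE : IsGenEuler d χ E)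
    (w : Fin 3 → ℕ) (hw : ∀ i, 0 < w i) (y1 y2 y3 : ℂ) (n : ℕ)
    (σ : Equiv.Perm (Fin 3)) :
    (∑ k ∈ range (n + 1), ∑ l ∈ range (n + 1 - k),
      (multinom k l (n - k - l) : ℂ) * E k ((w (σ 0) : ℂ) * y1) *
        E l ((w (σ 1) : ℂ) * y2) * E (n - k - l) ((w (σ 2) : ℂ) * y3) *
        (w (σ 0) : ℂ) ^ (l + (n - k - l)) * (w (σ 1) : ℂ) ^ (k + (n - k - l)) *
        (w (σ 2) : ℂ) ^ (k + l))
    = ∑ k ∈ range (n + 1), ∑ l ∈ range (n + 1 - k),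
      (multinom k l (n - k - l) : ℂ) * E k ((w 0 : ℂ) * y1) *
        E l ((w 1 : ℂ) * y2) * E (n - k - l) ((w 2 : ℂ) * y3) *
        (w 0 : ℂ) ^ (l + (n - k - l)) * (w 1 : ℂ) ^ (k + (n - k - l)) *
        (w 2 : ℂ) ^ (k + l) :=
  stmt_0_general d χ E hE w y1 y2 y3 n σ
end

section
/- For any odd positive integers w1, w2, w3 and any nonnegative integer n: Σ_{k+l+m=n} (n choose k,l,m) T_k(w1 d − 1, χ) T_l(w2 d − 1, χ) T_m(w3 d − 1, χ) w3^{k} w1^{l} w2^{m} = Σ_{k+l+m=n} (n choose k,l,m) T_k(w1 d − 1, χ) T_l(w3 d − 1, χ) T_m(w2 d − 1, χ) w2^{k} w1^{l} w3^{m}. -/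
open Finset

/-! The exponential generating function of `k ↦ T_k(w d - 1, χ) cᵏ` is
`Σ_{b < w d} (-1)^b χ(b) e^{bct}`. Splitting `b = j d + a` and using that `d` is odd and `χ` is
`d`-periodic, it factors as `S(c) · G_w(d c)` with `S(c) = Σ_{a < d} (-1)^a χ(a) e^{act}` and
`G_w(x) = Σ_{j < w} (-1)^j e^{jxt}`, and `(e^{xt} + 1) G_w(x) = e^{wxt} + 1` since `w` is odd.
Each side is `n!` times the `tⁿ`-coefficient of a product of three such generating functions,
which becomes
`S(w₁) S(w₂) S(w₃) · Π (e^{d wᵢ wⱼ t} + 1) / Π (e^{d wᵢ t} + 1)`, a symmetric expression. -/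

open PowerSeries

lemma expPS_eq_rescale (c : ℂ) : expPS c = rescale c (exp ℂ) := by
  ext n
  simp [expPS, coeff_rescale, coeff_exp, div_eq_mul_inv]

lemma expPS_mul_expPS (a b : ℂ) : expPS a * expPS b = expPS (a + b) := by
  simpa only [expPS_eq_rescale] using exp_mul_exp_eq_exp_add a b

lemma expPS_pow (c : ℂ) (j : ℕ) : expPS c ^ j = expPS (j * c) := by
  rw [expPS_eq_rescale, expPS_eq_rescale, ← map_pow, exp_pow_eq_rescale_exp, rescale_rescale]

lemma expPS_add_one_ne_zero (c : ℂ) : expPS c + 1 ≠ 0 := by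
  intro h
  have h0 := congrArg (coeff 0) h
  norm_num [expPS] at h0

lemma sum_range_mul_eq_sum_sum {M : Type*} [AddCommMonoid M] (f : ℕ → M) (w d : ℕ) :
    ∑ b ∈ range (w * d), f b = ∑ j ∈ range w, ∑ a ∈ range d, f (j * d + a) := by
  induction w with
  | zero => simp
  | succ w ih => rw [Nat.succ_mul, sum_range_add, ih, sum_range_succ]

noncomputable def altGeomSeries (w : ℕ) (x : ℂ) : PowerSeries ℂ :=
  ∑ j ∈ range w, ((-1 : ℂ) ^ j) • expPS (j * x)

lemma expPS_add_one_mul_altGeomSeries {w : ℕ} (hw : Odd w) (x : ℂ) :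
    (expPS x + 1) * altGeomSeries w x = expPS (w * x) + 1 := by
  have hterm (j : ℕ) : (-expPS x) ^ j = ((-1 : ℂ) ^ j) • expPS (j * x) := by
    rw [neg_pow, expPS_pow, smul_eq_C_mul, map_pow, map_neg, map_one]
  have hgeom := geom_sum_mul_neg (-expPS x) w
  simp only [hterm, hw.neg_pow, one_pow, neg_smul, one_smul, sub_neg_eq_add] at hgeom
  rw [altGeomSeries, mul_comm, add_comm, hgeom, add_comm]

lemma altGeomSeries_symm {w₁ w₂ w₃ : ℕ} (h₁ : Odd w₁) (h₂ : Odd w₂) (h₃ : Odd w₃) (x : ℂ) :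
    altGeomSeries w₁ (x * w₃) * altGeomSeries w₂ (x * w₁) * altGeomSeries w₃ (x * w₂)
      = altGeomSeries w₁ (x * w₂) * altGeomSeries w₃ (x * w₁) * altGeomSeries w₂ (x * w₃) := by
  set F : ℂ → PowerSeries ℂ := fun y => expPS y + 1
  have hF (y : ℂ) : F y ≠ 0 := expPS_add_one_ne_zero y
  have hG {w : ℕ} (hw : Odd w) (y : ℂ) : F y * altGeomSeries w y = F (w * y) :=
    expPS_add_one_mul_altGeomSeries hw y
  refine mul_left_cancel₀ (mul_ne_zero (mul_ne_zero (hF (x * w₁)) (hF (x * w₂))) (hF (x * w₃))) ?_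
  calc F (x * w₁) * F (x * w₂) * F (x * w₃) *
        (altGeomSeries w₁ (x * w₃) * altGeomSeries w₂ (x * w₁) * altGeomSeries w₃ (x * w₂))
      = F (x * w₃) * altGeomSeries w₁ (x * w₃) * (F (x * w₁) * altGeomSeries w₂ (x * w₁)) *
          (F (x * w₂) * altGeomSeries w₃ (x * w₂)) := by ring
    _ = F (w₁ * (x * w₃)) * F (w₂ * (x * w₁)) * F (w₃ * (x * w₂)) := by
        rw [hG h₁, hG h₂, hG h₃]
    _ = F (w₁ * (x * w₂)) * F (w₃ * (x * w₁)) * F (w₂ * (x * w₃)) := by ring_nf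
    _ = F (x * w₁) * F (x * w₂) * F (x * w₃) *
          (altGeomSeries w₁ (x * w₂) * altGeomSeries w₃ (x * w₁) * altGeomSeries w₂ (x * w₃)) := by
        rw [← hG h₁, ← hG h₂, ← hG h₃]
        ring

noncomputable def altPowSumEGF (χ : ℤ → ℂ) (N : ℕ) (c : ℂ) : PowerSeries ℂ :=
  mk fun k => altPowSum χ k N * c ^ k / k.factorial

lemma altPowSumEGF_eq_sum (χ : ℤ → ℂ) (N : ℕ) (c : ℂ) :
    altPowSumEGF χ N c = ∑ b ∈ range (N + 1), ((-1 : ℂ) ^ b * χ b) • expPS (b * c) := by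
  ext k
  simp only [altPowSumEGF, altPowSum, expPS, coeff_mk, map_sum, coeff_smul, sum_mul, sum_div,
    smul_eq_mul, mul_pow]
  exact sum_congr rfl fun b _ => by ring

lemma altPowSumEGF_mul_sub_one {d : ℕ} (hd : Odd d) {χ : ℤ → ℂ}
    (hper : Function.Periodic χ d) {w : ℕ} (hw : 0 < w) (c : ℂ) :
    altPowSumEGF χ (w * d - 1) c = altPowSumEGF χ (d - 1) c * altGeomSeries w (d * c) := by
  rw [altPowSumEGF_eq_sum, altPowSumEGF_eq_sum, Nat.sub_add_cancel (Nat.mul_pos hw hd.pos),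
    Nat.sub_add_cancel hd.pos, altGeomSeries, sum_mul_sum, sum_range_mul_eq_sum_sum, sum_comm]
  refine sum_congr rfl fun a _ => sum_congr rfl fun j _ => ?_
  rw [smul_mul_smul_comm, expPS_mul_expPS]
  congr 1
  · have hχ : χ ((j * d + a : ℕ) : ℤ) = χ a := by
      simpa [add_comm] using hper.nat_mul j a
    rw [hχ, pow_add, pow_mul', hd.neg_one_pow]
    ring
  · congr 1
    push_cast
    ring

lemma multinom_mul_factorials (k l m : ℕ) :
    (multinom k l m : ℂ) * (k.factorial * l.factorial * m.factorial) = (k + l + m).factorial := by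
  have hdvd : k.factorial * l.factorial * m.factorial ∣ (k + l + m).factorial := by
    rw [mul_assoc, add_assoc]
    exact (mul_dvd_mul_left _ (Nat.factorial_mul_factorial_dvd_factorial_add l m)).trans
      (Nat.factorial_mul_factorial_dvd_factorial_add k (l + m))
  exact_mod_cast Nat.div_mul_cancel hdvd

lemma coeff_mul_mul (P Q R : PowerSeries ℂ) (n : ℕ) :
    coeff n (P * Q * R) = ∑ k ∈ range (n + 1), ∑ l ∈ range (n + 1 - k),
      coeff k P * coeff l Q * coeff (n - k - l) R := by
  rw [mul_assoc, coeff_mul, Nat.sum_antidiagonal_eq_sum_range_succ_mk]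
  refine sum_congr rfl fun k hk => ?_
  rw [coeff_mul, Nat.sum_antidiagonal_eq_sum_range_succ_mk, mul_sum,
    show n + 1 - k = n - k + 1 by have := mem_range.mp hk; omega]
  exact sum_congr rfl fun l _ => (mul_assoc _ _ _).symm

lemma sum_multinom_altPowSum (χ : ℤ → ℂ) (N₁ N₂ N₃ : ℕ) (c₁ c₂ c₃ : ℂ) (n : ℕ) :
    ∑ k ∈ range (n + 1), ∑ l ∈ range (n + 1 - k),
      (multinom k l (n - k - l) : ℂ) * altPowSum χ k N₁ * altPowSum χ l N₂ *
        altPowSum χ (n - k - l) N₃ * c₁ ^ k * c₂ ^ l * c₃ ^ (n - k - l)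
    = n.factorial *
        coeff n (altPowSumEGF χ N₁ c₁ * altPowSumEGF χ N₂ c₂ * altPowSumEGF χ N₃ c₃) := by
  rw [coeff_mul_mul, mul_sum]
  refine sum_congr rfl fun k hk => ?_
  rw [mul_sum]
  refine sum_congr rfl fun l hl => ?_
  have hn : k + l + (n - k - l) = n := by
    have := mem_range.mp hk; have := mem_range.mp hl; omega
  simp only [altPowSumEGF, coeff_mk]
  rw [← hn, ← multinom_mul_factorials, hn]
  field_simp [Nat.factorial_ne_zero]

theorem stmt_7_general (d : ℕ) (hd : Odd d) (χ : ℤ → ℂ)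
    (hper : ∀ a : ℤ, χ (a + d) = χ a)
    (w1 w2 w3 : ℕ) (hw1 : 0 < w1) (hw2 : 0 < w2) (hw3 : 0 < w3)
    (hw1o : Odd w1) (hw2o : Odd w2) (hw3o : Odd w3) (n : ℕ) :
    (∑ k ∈ range (n + 1), ∑ l ∈ range (n + 1 - k),
      (multinom k l (n - k - l) : ℂ) * altPowSum χ k (w1 * d - 1) *
        altPowSum χ l (w2 * d - 1) * altPowSum χ (n - k - l) (w3 * d - 1) *
        (w3 : ℂ) ^ k * (w1 : ℂ) ^ l * (w2 : ℂ) ^ (n - k - l))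
    = ∑ k ∈ range (n + 1), ∑ l ∈ range (n + 1 - k),
      (multinom k l (n - k - l) : ℂ) * altPowSum χ k (w1 * d - 1) *
        altPowSum χ l (w3 * d - 1) * altPowSum χ (n - k - l) (w2 * d - 1) *
        (w2 : ℂ) ^ k * (w1 : ℂ) ^ l * (w3 : ℂ) ^ (n - k - l) := by
  have hfactor {w : ℕ} (hw : 0 < w) (c : ℂ) :=
    altPowSumEGF_mul_sub_one hd (χ := χ) hper hw c
  rw [sum_multinom_altPowSum, sum_multinom_altPowSum, hfactor hw1, hfactor hw2, hfactor hw3,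
    hfactor hw1, hfactor hw3, hfactor hw2]
  congr 2
  linear_combination altPowSumEGF χ (d - 1) w1 * altPowSumEGF χ (d - 1) w2 *
    altPowSumEGF χ (d - 1) w3 * altGeomSeries_symm hw1o hw2o hw3o (d : ℂ)

/-- Theorem 8: two symmetries for the triple sum with three alternating generalized
power sum factors. -/
theorem stmt_7 (d : ℕ) (hd : Odd d) (hd0 : 0 < d) (χ : ℤ → ℂ)
    (hper : ∀ a : ℤ, χ (a + d) = χ a)
    (hmul : ∀ a b : ℤ, χ (a * b) = χ a * χ b) (hone : χ 1 = 1)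
    (hvan : ∀ a : ℤ, 1 < Int.gcd a d → χ a = 0)
    (w1 w2 w3 : ℕ) (hw1 : 0 < w1) (hw2 : 0 < w2) (hw3 : 0 < w3)
    (hw1o : Odd w1) (hw2o : Odd w2) (hw3o : Odd w3) (n : ℕ) :
    (∑ k ∈ range (n + 1), ∑ l ∈ range (n + 1 - k),
      (multinom k l (n - k - l) : ℂ) * altPowSum χ k (w1 * d - 1) *
        altPowSum χ l (w2 * d - 1) * altPowSum χ (n - k - l) (w3 * d - 1) *
        (w3 : ℂ) ^ k * (w1 : ℂ) ^ l * (w2 : ℂ) ^ (n - k - l))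
    = ∑ k ∈ range (n + 1), ∑ l ∈ range (n + 1 - k),
      (multinom k l (n - k - l) : ℂ) * altPowSum χ k (w1 * d - 1) *
        altPowSum χ l (w3 * d - 1) * altPowSum χ (n - k - l) (w2 * d - 1) *
        (w2 : ℂ) ^ k * (w1 : ℂ) ^ l * (w3 : ℂ) ^ (n - k - l) :=
  stmt_7_general d hd χ hper w1 w2 w3 hw1 hw2 hw3 hw1o hw2o hw3o n
end

section
/- For any odd positive integers w1, w2, w3, any complex number y1, and any nonnegative integer n: Σ_{k+l+m=n} (n choose k,l,m) E_{k,χ}(w1 y1) T_l(w2 d − 1, χ) T_m(w3 d − 1, χ) w1^{l+m} w2^{k+m} w3^{k+l} = w2^n Σ_{k=0}^{n} (n choose k) Σ_{a=0}^{w2 d − 1} (−1)^a χ(a) E_{k,χ}(w1 y1 + (w1/w2) a) T_{n−k}(w3 d − 1, χ) w1^{n−k} w3^{k}. -/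
/-!
The generating function of `E_{·,χ}` at `x + y` is `e^{yt}` times the one at `x`, which gives
the addition formula `E_{k,χ}(x + y) = Σ_j C(k,j) E_{j,χ}(x) y^{k-j}`. Applying it with
`y = (w1/w2) a` and summing over `a` turns the inner sum on the right into
`Σ_j C(k,j) E_{j,χ}(w1 y1) (w1/w2)^{k-j} T_{k-j}(w2 d - 1, χ)`; regrouping
`C(n,k) C(k,j)` as a trinomial coefficient yields the left-hand side.
-/

open Finset

section

open PowerSeries Nat

theorem expPS_mul_mk_div_factorial (y : ℂ) (a : ℕ → ℂ) :
    expPS y * mk (fun n => a n / n !) =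
      mk fun n => (∑ j ∈ range (n + 1), (n.choose j : ℂ) * a j * y ^ (n - j)) / n ! := by
  ext n
  rw [coeff_mul, Nat.sum_antidiagonal_eq_sum_range_succ_mk, coeff_mk, sum_div,
    ← sum_range_reflect]
  refine sum_congr rfl fun j hj => ?_
  have hjn : j ≤ n := Nat.lt_succ_iff.mp (mem_range.mp hj)
  simp only [expPS, coeff_mk, Nat.succ_sub_one, Nat.sub_sub_self hjn]
  have : (n ! : ℂ) ≠ 0 := Nat.cast_ne_zero.mpr n.factorial_ne_zero
  rw [Nat.cast_choose ℂ hjn]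
  field_simp

theorem expPS_add (x y : ℂ) : expPS (x + y) = expPS x * expPS y := by
  rw [mul_comm, show expPS x = mk fun n => x ^ n / n ! from rfl, expPS_mul_mk_div_factorial,
    expPS]
  ext n
  simp only [coeff_mk, add_pow]
  congr 1
  exact sum_congr rfl fun j _ => by ring

namespace IsGenEuler

variable {d : ℕ} {χ : ℤ → ℂ} {E : ℕ → ℂ → ℂ}

theorem mk_apply_add (hE : IsGenEuler d χ E) (x y : ℂ) :
    mk (fun n => E n (x + y) / n !) = expPS y * mk fun n => E n x / n ! := by
  have hdenom : expPS (d : ℂ) + 1 ≠ 0 := fun h => by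
    simpa [expPS] using congrArg constantCoeff h
  apply mul_right_cancel₀ hdenom
  rw [hE, mul_assoc _ _ (expPS _ + 1), hE, expPS_add]
  ring

theorem apply_add (hE : IsGenEuler d χ E) (x y : ℂ) (n : ℕ) :
    E n (x + y) = ∑ j ∈ range (n + 1), (n.choose j : ℂ) * E j x * y ^ (n - j) := by
  have h := congrArg (coeff n) (hE.mk_apply_add x y)
  rwa [expPS_mul_mk_div_factorial, coeff_mk, coeff_mk,
    div_left_inj' (Nat.cast_ne_zero.mpr n.factorial_ne_zero)] at h

theorem sum_altChar_mul_apply_add_mul (hE : IsGenEuler d χ E) (X t : ℂ) (N k : ℕ) :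
    ∑ a ∈ range (N + 1), (-1 : ℂ) ^ a * χ a * E k (X + t * a) =
      ∑ j ∈ range (k + 1),
        (k.choose j : ℂ) * E j X * t ^ (k - j) * altPowSum χ (k - j) N := by
  simp only [hE.apply_add, mul_pow, mul_sum, altPowSum]
  rw [sum_comm]
  exact sum_congr rfl fun j _ => sum_congr rfl fun a _ => by ring

end IsGenEuler

end

theorem multinom_eq_choose_mul_choose (k l m : ℕ) :
    multinom k l m = (k + l + m).choose (k + l) * (k + l).choose k := by
  refine Nat.div_eq_of_eq_mul_left (by positivity) ?_
  rw [Nat.choose_symm_add, Nat.choose_symm_add,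
    ← Nat.add_choose_mul_factorial_mul_factorial (k + l) m,
    ← Nat.add_choose_mul_factorial_mul_factorial k l]
  ring

theorem sum_multinom_mul_eq_sum_choose_mul_sum_choose {R : Type*} [CommSemiring R] (n : ℕ)
    (f : ℕ → ℕ → ℕ → R) :
    ∑ k ∈ range (n + 1), ∑ l ∈ range (n + 1 - k),
        (multinom k l (n - k - l) : R) * f k l (n - k - l) =
      ∑ k ∈ range (n + 1), (n.choose k : R) *
        ∑ j ∈ range (k + 1), (k.choose j : R) * f j (k - j) (n - k) := by
  simp only [mul_sum]
  rw [← sum_range_diag_flip (n + 1) fun j l => (multinom j l (n - j - l) : R) * f j l (n - j - l)]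
  refine sum_congr rfl fun k hk => sum_congr rfl fun j hj => ?_
  have hkn : k ≤ n := Nat.lt_succ_iff.mp (mem_range.mp hk)
  have hjk : j ≤ k := Nat.lt_succ_iff.mp (mem_range.mp hj)
  obtain ⟨l, rfl⟩ := Nat.exists_eq_add_of_le hjk
  obtain ⟨m, rfl⟩ := Nat.exists_eq_add_of_le hkn
  have hm : j + l + m - j - l = m := by omega
  simp only [multinom_eq_choose_mul_choose, Nat.add_sub_cancel_left, hm]
  push_cast
  ring

theorem stmt_11_general (d : ℕ) (hd0 : 0 < d) (χ : ℤ → ℂ)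
    (E : ℕ → ℂ → ℂ) (hE : IsGenEuler d χ E)
    (w1 w2 w3 : ℕ) (hw2 : 0 < w2)
    (y1 : ℂ) (n : ℕ) :
    (∑ k ∈ range (n + 1), ∑ l ∈ range (n + 1 - k),
      (multinom k l (n - k - l) : ℂ) * E k ((w1 : ℂ) * y1) *
        altPowSum χ l (w2 * d - 1) * altPowSum χ (n - k - l) (w3 * d - 1) *
        (w1 : ℂ) ^ (l + (n - k - l)) * (w2 : ℂ) ^ (k + (n - k - l)) * (w3 : ℂ) ^ (k + l))
    = (w2 : ℂ) ^ n * ∑ k ∈ range (n + 1),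
        (n.choose k : ℂ) *
          (∑ a ∈ range (w2 * d), (-1 : ℂ) ^ a * χ (a : ℤ) *
            E k ((w1 : ℂ) * y1 + (w1 : ℂ) / (w2 : ℂ) * (a : ℂ))) *
          altPowSum χ (n - k) (w3 * d - 1) * (w1 : ℂ) ^ (n - k) * (w3 : ℂ) ^ k := by
  obtain ⟨N, hN⟩ : ∃ N, w2 * d = N + 1 := Nat.exists_eq_add_one.mpr (Nat.mul_pos hw2 hd0)
  have hw2' : (w2 : ℂ) ≠ 0 := Nat.cast_ne_zero.mpr hw2.ne'
  have hconv := sum_multinom_mul_eq_sum_choose_mul_sum_choose n fun k l m =>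
    E k (w1 * y1) * altPowSum χ l N * altPowSum χ m (w3 * d - 1) *
      (w1 : ℂ) ^ (l + m) * (w2 : ℂ) ^ (k + m) * (w3 : ℂ) ^ (k + l)
  simp only [← mul_assoc] at hconv
  rw [hN, Nat.add_sub_cancel, hconv, mul_sum]
  simp only [hE.sum_altChar_mul_apply_add_mul, mul_sum, sum_mul]
  refine sum_congr rfl fun k hk => sum_congr rfl fun j hj => ?_
  obtain ⟨l, rfl⟩ := Nat.exists_eq_add_of_le (Nat.lt_succ_iff.mp (mem_range.mp hj))
  obtain ⟨m, rfl⟩ := Nat.exists_eq_add_of_le (Nat.lt_succ_iff.mp (mem_range.mp hk))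
  simp only [Nat.add_sub_cancel_left, div_pow, pow_add]
  field_simp

/-- Identity between the two expressions (a-2(1)) and (a-2(2)) for `I(Λ²₃²)`. -/
theorem stmt_11 (d : ℕ) (hd : Odd d) (hd0 : 0 < d) (χ : ℤ → ℂ)
    (hper : ∀ a : ℤ, χ (a + d) = χ a)
    (hmul : ∀ a b : ℤ, χ (a * b) = χ a * χ b) (hone : χ 1 = 1)
    (hvan : ∀ a : ℤ, 1 < Int.gcd a d → χ a = 0)
    (E : ℕ → ℂ → ℂ) (hE : IsGenEuler d χ E)
    (w1 w2 w3 : ℕ) (hw1 : 0 < w1) (hw2 : 0 < w2) (hw3 : 0 < w3)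
    (hw1o : Odd w1) (hw2o : Odd w2) (hw3o : Odd w3)
    (y1 : ℂ) (n : ℕ) :
    (∑ k ∈ range (n + 1), ∑ l ∈ range (n + 1 - k),
      (multinom k l (n - k - l) : ℂ) * E k ((w1 : ℂ) * y1) *
        altPowSum χ l (w2 * d - 1) * altPowSum χ (n - k - l) (w3 * d - 1) *
        (w1 : ℂ) ^ (l + (n - k - l)) * (w2 : ℂ) ^ (k + (n - k - l)) * (w3 : ℂ) ^ (k + l))
    = (w2 : ℂ) ^ n * ∑ k ∈ range (n + 1),
        (n.choose k : ℂ) *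
          (∑ a ∈ range (w2 * d), (-1 : ℂ) ^ a * χ (a : ℤ) *
            E k ((w1 : ℂ) * y1 + (w1 : ℂ) / (w2 : ℂ) * (a : ℂ))) *
          altPowSum χ (n - k) (w3 * d - 1) * (w1 : ℂ) ^ (n - k) * (w3 : ℂ) ^ k :=
  stmt_11_general d hd0 χ E hE w1 w2 w3 hw2 y1 n
end
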